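/- arXiv:2102.01014 — 7 statements merged into one kernel-verified Lean document; each statement's English description precedes it below -/
import Mathlib

section
/- Every direct summand of a finite Σ-Rickart module is finite Σ-Rickart. -/
/-- A module is Rickart if the kernel of every endomorphism is a direct summand. -/
def IsRickart (R M : Type*) [Ring R] [AddCommGroup M] [Module R M] : Prop :=
  ∀ φ : M →ₗ[R] M, ∃ N : Submodule R M, IsCompl (LinearMap.ker φ) N

/-- A module is finite Σ-Rickart if `M^(n)` is Rickart for every `n > 0`. -/
def IsFinSigmaRickart (R M : Type*) [Ring R] [AddCommGroup M] [Module R M] : Prop :=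
  ∀ n : ℕ, 0 < n → IsRickart R (Fin n → M)

/-- `N` is finitely `M`-generated if there is an epimorphism `M^(n) → N` for some `n > 0`. -/
def FinMGen (R M N : Type*) [Ring R] [AddCommGroup M] [Module R M]
    [AddCommGroup N] [Module R N] : Prop :=
  ∃ n : ℕ, 0 < n ∧ ∃ f : (Fin n → M) →ₗ[R] N, Function.Surjective f

/-- Every direct summand of a finite Σ-Rickart module is finite Σ-Rickart. -/
theorem stmt0 {R M : Type*} [Ring R] [AddCommGroup M] [Module R M]
    (hM : IsFinSigmaRickart R M) (N N' : Submodule R M) (h : IsCompl N N') :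
    IsFinSigmaRickart R N := by
  intro n hn φ
  set p := N.projectionOnto N' h with hp
  let incl : (Fin n → N) →ₗ[R] (Fin n → M) :=
    { toFun := fun v i => (v i : M)
      map_add' := fun a b => rfl
      map_smul' := fun r a => rfl }
  let proj : (Fin n → M) →ₗ[R] (Fin n → N) :=
    { toFun := fun w i => p (w i)
      map_add' := by intro a b; funext i; simp
      map_smul' := by intro r a; funext i; simp }
  have hpi : ∀ v : Fin n → N, proj (incl v) = v := by
    intro v; funext i
    simp [incl, proj, hp, Submodule.projectionOnto_apply_left]
  have hinj : Function.Injective incl := by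
    intro a b hab
    funext i
    exact Subtype.ext (congrFun hab i)
  set ψ : (Fin n → M) →ₗ[R] (Fin n → M) := incl ∘ₗ φ ∘ₗ proj with hψ
  obtain ⟨K, hK⟩ := hM n hn ψ
  have hkerproj : LinearMap.ker proj ≤ LinearMap.ker ψ := by
    intro w hw
    have : proj w = 0 := hw
    simp [hψ, LinearMap.mem_ker, this]
  refine ⟨Submodule.comap incl ((LinearMap.ker proj) ⊔ K), ?_, ?_⟩
  · rw [Submodule.disjoint_def]
    intro x hx hxT
    have hxker : incl x ∈ LinearMap.ker ψ := by
      have hφx : φ x = 0 := hx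
      simp [hψ, LinearMap.mem_ker, hpi, hφx]
    obtain ⟨b, hb, k, hk, hbk⟩ := Submodule.mem_sup.mp (Submodule.mem_comap.mp hxT)
    have hkker : k ∈ LinearMap.ker ψ := by
      have : k = incl x - b := by rw [← hbk]; abel
      rw [this]
      exact Submodule.sub_mem _ hxker (hkerproj hb)
    have hk0 : k = 0 := Submodule.disjoint_def.mp hK.disjoint k hkker hk
    have hbx : incl x = b := by rw [← hbk, hk0, add_zero]
    have : proj (incl x) = 0 := by rw [hbx]; exact hb
    rw [hpi] at this
    exact this
  · rw [codisjoint_iff, eq_top_iff]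
    intro x _
    have : incl x ∈ LinearMap.ker ψ ⊔ K := by
      rw [codisjoint_iff.mp hK.codisjoint]; trivial
    obtain ⟨w, hw, k, hk, hwk⟩ := Submodule.mem_sup.mp this
    have hs : φ (proj w) = 0 := by
      apply hinj
      have hw' : ψ w = 0 := hw
      rw [hψ] at hw'
      simpa using hw'
    refine Submodule.mem_sup.mpr ⟨proj w, hs, x - proj w, ?_, by abel⟩
    refine Submodule.mem_comap.mpr (Submodule.mem_sup.mpr ⟨w - incl (proj w), ?_, k, hk, ?_⟩)
    · have : proj (w - incl (proj w)) = 0 := by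
        rw [map_sub, hpi, sub_self]
      exact this
    · rw [map_sub, ← hwk]; abel
end

section
/- If M is a finite Σ-Rickart module, then the intersection of any two finitely M-generated submodules of M is finitely M-generated. -/
/-- For a finite Σ-Rickart module, the intersection of two finitely M-generated
submodules of M is finitely M-generated. -/
theorem stmt3 {R M : Type*} [Ring R] [AddCommGroup M] [Module R M]
    (hM : IsFinSigmaRickart R M) (A B : Submodule R M)
    (hA : FinMGen R M A) (hB : FinMGen R M B) :
    FinMGen R M (A ⊓ B : Submodule R M) := by
  obtain ⟨a, ha, f, hf⟩ := hA
  obtain ⟨b, hb, g, hg⟩ := hB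
  have hab : 0 < a + b := Nat.lt_of_lt_of_le ha (Nat.le_add_right a b)
  -- restriction maps
  set fl : (Fin (a + b) → M) →ₗ[R] (Fin a → M) := LinearMap.funLeft R M (Fin.castAdd b) with hfl
  set fr : (Fin (a + b) → M) →ₗ[R] (Fin b → M) := LinearMap.funLeft R M (Fin.natAdd a) with hfr
  set F : (Fin (a + b) → M) →ₗ[R] M :=
    (A.subtype ∘ₗ f ∘ₗ fl) - (B.subtype ∘ₗ g ∘ₗ fr) with hF
  set θ : (Fin (a + b) → M) →ₗ[R] (Fin (a + b) → M) :=
    LinearMap.pi (fun _ => F) with hθ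
  have hker : LinearMap.ker θ = LinearMap.ker F := by
    ext v
    simp only [LinearMap.mem_ker, hθ, LinearMap.pi_apply, funext_iff, Pi.zero_apply]
    exact ⟨fun h => h ⟨0, hab⟩, fun h _ => h⟩
  obtain ⟨N, hN⟩ := hM (a + b) hab θ
  rw [hker] at hN
  set K := LinearMap.ker F
  -- projection onto K is surjective
  set p : (Fin (a + b) → M) →ₗ[R] K := Submodule.linearProjOfIsCompl K N hN with hp
  have hpsurj : Function.Surjective p := fun k => by
    exact ⟨(k : Fin (a + b) → M), Submodule.linearProjOfIsCompl_apply_left hN k⟩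
  -- map K into A ⊓ B
  have hmem : ∀ k : K, (A.subtype ∘ₗ f ∘ₗ fl ∘ₗ K.subtype) k ∈ A ⊓ B := by
    intro k
    refine ⟨(f (fl (k : Fin (a + b) → M))).2, ?_⟩
    have hk : F (k : Fin (a + b) → M) = 0 := k.2
    have : (A.subtype (f (fl (k : Fin (a + b) → M)))) =
        B.subtype (g (fr (k : Fin (a + b) → M))) := by
      have := sub_eq_zero.mp hk
      simpa using this
    simp only [LinearMap.comp_apply, Submodule.subtype_apply]
    rw [Submodule.subtype_apply] at this
    rw [this]
    exact (g (fr (k : Fin (a + b) → M))).2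
  set s : K →ₗ[R] (A ⊓ B : Submodule R M) :=
    LinearMap.codRestrict (A ⊓ B) (A.subtype ∘ₗ f ∘ₗ fl ∘ₗ K.subtype) hmem with hs
  have hssurj : Function.Surjective s := by
    rintro ⟨m, hmA, hmB⟩
    obtain ⟨x, hx⟩ := hf ⟨m, hmA⟩
    obtain ⟨y, hy⟩ := hg ⟨m, hmB⟩
    refine ⟨⟨Fin.append x y, ?_⟩, ?_⟩
    · show F (Fin.append x y) = 0
      have h1 : fl (Fin.append x y) = x := by
        funext i; simp [hfl, LinearMap.funLeft_apply]
      have h2 : fr (Fin.append x y) = y := by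
        funext i; simp [hfr, LinearMap.funLeft_apply]
      simp [hF, h1, h2, hx, hy]
    · apply Subtype.ext
      have h1 : fl (Fin.append x y) = x := by
        funext i; simp [hfl, LinearMap.funLeft_apply]
      simp [hs, LinearMap.codRestrict, h1, hx]
  exact ⟨a + b, hab, s ∘ₗ p, hssurj.comp hpsurj⟩
end

section
/- For a right semi-hereditary ring R, the intersection of two finitely generated right ideals of R is finitely generated. -/
/-- For a right semi-hereditary ring (every finitely generated ideal is projective),
the intersection of two finitely generated ideals is finitely generated. -/
theorem stmt4 {R : Type*} [Ring R]
    (hsh : ∀ I : Ideal R, I.FG → Module.Projective R I)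
    (I J : Ideal R) (hI : I.FG) (hJ : J.FG) : (I ⊓ J).FG := by
  set K : Ideal R := I ⊔ J with hKdef
  have hK : K.FG := Submodule.FG.sup hI hJ
  have hP : Module.Projective R K := hsh K hK
  -- the addition map I × J → K
  set f : (I × J) →ₗ[R] K :=
    (Submodule.inclusion (le_sup_left : I ≤ K)).comp (LinearMap.fst R I J) +
      (Submodule.inclusion (le_sup_right : J ≤ K)).comp (LinearMap.snd R I J) with hfdef
  have hfval : ∀ x : I × J, ((f x : R)) = (x.1 : R) + (x.2 : R) := by
    intro x; simp [hfdef, Submodule.inclusion]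
  have hsurj : Function.Surjective f := by
    rintro ⟨z, hz⟩
    rcases Submodule.mem_sup.mp hz with ⟨x, hx, y, hy, rfl⟩
    exact ⟨(⟨x, hx⟩, ⟨y, hy⟩), Subtype.ext (hfval _)⟩
  obtain ⟨s, hs⟩ := Module.projective_lifting_property f LinearMap.id
    (LinearMap.range_eq_top.mp (LinearMap.range_eq_top.mpr hsurj))
  have hs' : ∀ z : K, f (s z) = z := fun z => congrArg (· z) hs
  set g : (I × J) →ₗ[R] (I × J) := LinearMap.id - s.comp f with hgdef
  have hker : LinearMap.ker f = LinearMap.range g := by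
    apply le_antisymm
    · intro x hx
      refine ⟨x, ?_⟩
      have hx0 : f x = 0 := hx
      simp [hgdef, hx0]
    · rintro _ ⟨x, rfl⟩
      have : f (g x) = 0 := by
        simp [hgdef, hs']
      exact this
  set π : (I × J) →ₗ[R] R := (Submodule.subtype I).comp (LinearMap.fst R I J) with hπdef
  have hmap : I ⊓ J = Submodule.map π (LinearMap.ker f) := by
    apply le_antisymm
    · rintro z ⟨hzI, hzJ⟩
      refine ⟨(⟨z, hzI⟩, ⟨-z, J.neg_mem hzJ⟩), ?_, rfl⟩
      have : ((f (⟨z, hzI⟩, ⟨-z, J.neg_mem hzJ⟩) : K) : R) = 0 := by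
        rw [hfval]; simp
      exact LinearMap.mem_ker.mpr (Subtype.ext this)
    · rintro _ ⟨x, hx, rfl⟩
      have h0 : ((f x : K) : R) = 0 := congrArg Subtype.val (LinearMap.mem_ker.mp hx)
      rw [hfval] at h0
      have hx1 : (x.1 : R) = -(x.2 : R) := eq_neg_of_add_eq_zero_left h0
      constructor
      · exact x.1.2
      · show (x.1 : R) ∈ J
        rw [hx1]; exact J.neg_mem x.2.2
  have hfinI : Module.Finite R I := Module.Finite.iff_fg.mpr hI
  have hfinJ : Module.Finite R J := Module.Finite.iff_fg.mpr hJ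
  have hfin : Module.Finite R (I × J) := Module.Finite.prod
  rw [hmap, hker, ← LinearMap.range_comp]
  exact Module.Finite.iff_fg.mp (Module.Finite.range (π.comp g))
end

section
/- If M is a module lying in the class 𝔉_M, then M satisfies condition C2. -/
/-- `A` belongs to the class 𝔉_M: every homomorphism from a finitely `M`-generated
submodule of `M` into `A` extends to `M`. -/
def InFM (R M A : Type*) [Ring R] [AddCommGroup M] [Module R M]
    [AddCommGroup A] [Module R A] : Prop :=
  ∀ N : Submodule R M, FinMGen R M N →
    ∀ β : N →ₗ[R] A, ∃ γ : M →ₗ[R] A, γ.comp N.subtype = β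

/-- Condition C2: every submodule isomorphic to a direct summand is a direct summand. -/
def HasC2 (R M : Type*) [Ring R] [AddCommGroup M] [Module R M] : Prop :=
  ∀ N : Submodule R M,
    (∃ N' N'' : Submodule R M, IsCompl N' N'' ∧ Nonempty (N ≃ₗ[R] N')) →
    ∃ Nc : Submodule R M, IsCompl N Nc

/-- If `M` lies in 𝔉_M then `M` satisfies condition C2. -/
theorem stmt7 {R M : Type*} [Ring R] [AddCommGroup M] [Module R M]
    (h : InFM R M M) : HasC2 R M := by
  rintro N ⟨N', N'', hc, ⟨φ⟩⟩
  set p := N'.projectionOnto N'' hc with hp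
  have hfg : FinMGen R M N := by
    refine ⟨1, one_pos, (φ.symm.toLinearMap.comp p).comp (LinearMap.proj 0), ?_⟩
    intro y
    refine ⟨fun _ => (φ y : M), ?_⟩
    simp [hp]
  obtain ⟨γ, hγ⟩ := h N hfg (N'.subtype.comp (φ : N →ₗ[R] N'))
  refine ⟨LinearMap.ker ((φ.symm.toLinearMap.comp p).comp γ), ?_⟩
  apply LinearMap.isCompl_of_proj
  intro x
  have hx : γ x = (φ x : M) := congrArg (fun f => f x) hγ
  simp [hx, hp]
end

section
/- If every finitely M-generated submodule of a module A belongs to 𝔉_M, then A belongs to 𝔉_M. -/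
/-- If every finitely `M`-generated submodule of `A` belongs to 𝔉_M, then so does `A`. -/
theorem stmt8 {R M A : Type*} [Ring R] [AddCommGroup M] [Module R M]
    [AddCommGroup A] [Module R A]
    (h : ∀ P : Submodule R A, FinMGen R M P → InFM R M P) :
    InFM R M A := by
  intro N hN β
  obtain ⟨n, hn, f, hf⟩ := hN
  have hP : FinMGen R M (LinearMap.range β) :=
    ⟨n, hn, β.rangeRestrict.comp f, (β.surjective_rangeRestrict).comp hf⟩
  obtain ⟨γ, hγ⟩ := h (LinearMap.range β) hP N ⟨n, hn, f, hf⟩ β.rangeRestrict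
  refine ⟨(LinearMap.range β).subtype.comp γ, ?_⟩
  ext x
  have := congrFun (congrArg DFunLike.coe hγ) x
  simpa using congrArg (Subtype.val) this
end

section
/- Let M be an M-coherent module. If ρ: B → C is an epimorphism with B finitely M-generated and C a submodule of M, then the kernel of ρ is finitely M-generated. -/
/-- `M` is `M`-coherent: kernels of homomorphisms from `M^(n)` to finitely
`M`-generated submodules of `M` are finitely `M`-generated. -/
def MCoherent (R M : Type*) [Ring R] [AddCommGroup M] [Module R M] : Prop :=
  ∀ n : ℕ, 0 < n → ∀ N : Submodule R M, FinMGen R M N →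
    ∀ ρ : (Fin n → M) →ₗ[R] N, FinMGen R M (LinearMap.ker ρ)


/-- For an `M`-coherent module `M`, the kernel of an epimorphism from a finitely
`M`-generated module onto a submodule of `M` is finitely `M`-generated. -/
theorem stmt15 {R M : Type*} [Ring R] [AddCommGroup M] [Module R M]
    (hM : MCoherent R M) (C : Submodule R M)
    (B : Type u) (_ : AddCommGroup B) (_ : Module R B) (hB : FinMGen R M B)
    (ρ : B →ₗ[R] C) (hρ : Function.Surjective ρ) :
    FinMGen R M (LinearMap.ker ρ) := by
  obtain ⟨n, hn, f, hf⟩ := hB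
  have hC : FinMGen R M C := ⟨n, hn, ρ.comp f, hρ.comp hf⟩
  obtain ⟨m, hm, g, hg⟩ := hM n hn C hC (ρ.comp f)
  have hmem : ∀ x ∈ LinearMap.ker (ρ.comp f), f x ∈ LinearMap.ker ρ := by
    intro x hx
    simpa using hx
  refine ⟨m, hm, (f.restrict hmem).comp g, ?_⟩
  have hsurj : Function.Surjective (f.restrict hmem) := by
    rintro ⟨b, hb⟩
    obtain ⟨x, hx⟩ := hf b
    refine ⟨⟨x, ?_⟩, ?_⟩
    · simp [LinearMap.mem_ker, hx, LinearMap.mem_ker.mp hb]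
    · ext
      simp [LinearMap.restrict_apply, hx]
  exact hsurj.comp hg
end

section
/- Let M be a finite Σ-Rickart right R-module and P a simple right R-module with Hom_R(M, P) = 0. Then M^(ℓ) ⊕ P^(n) is a finite Σ-Rickart module for all positive integers ℓ, n. -/
section aux

variable {R M P M₁ M₂ : Type*} [Ring R] [AddCommGroup M] [Module R M]
  [AddCommGroup P] [Module R P] [AddCommGroup M₁] [Module R M₁]
  [AddCommGroup M₂] [Module R M₂]

/-- Rickart transfers along linear equivalences. -/
lemma isRickart_of_equiv (e : M₁ ≃ₗ[R] M₂) (h : IsRickart R M₂) : IsRickart R M₁ := by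
  intro φ
  obtain ⟨N, hN⟩ := h ((e : M₁ →ₗ[R] M₂) ∘ₗ φ ∘ₗ (e.symm : M₂ →ₗ[R] M₁))
  refine ⟨N.comap (e : M₁ →ₗ[R] M₂), ?_⟩
  have hker : LinearMap.ker φ =
      (LinearMap.ker ((e : M₁ →ₗ[R] M₂) ∘ₗ φ ∘ₗ (e.symm : M₂ →ₗ[R] M₁))).comap
        (e : M₁ →ₗ[R] M₂) := by
    ext x
    simp [LinearMap.mem_ker]
  rw [hker]
  exact (Submodule.orderIsoMapComap e).symm.isCompl hN

/-- Relative complements in a complemented modular lattice. -/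
lemma relative_compl {α : Type*} [Lattice α] [BoundedOrder α] [IsModularLattice α]
    [ComplementedLattice α] {T S : α} (h : T ≤ S) :
    ∃ U, U ≤ S ∧ Disjoint T U ∧ T ⊔ U = S := by
  obtain ⟨T', hT'⟩ := exists_isCompl T
  refine ⟨S ⊓ T', inf_le_left, ?_, ?_⟩
  · exact hT'.disjoint.mono_right inf_le_right
  · rw [inf_comm, ← sup_inf_assoc_of_le _ h, hT'.sup_eq_top, top_inf_eq]

/-- `P^b` is semisimple when `P` is simple. -/
lemma pi_semisimple (hP : IsSimpleModule R P) (b : ℕ) :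
    IsSemisimpleModule R (Fin b → P) := by
  haveI := hP
  haveI : IsSemisimpleModule R P := inferInstance
  classical
  refine isSemisimpleModule_of_isSemisimpleModule_submodule'
    (p := fun i : Fin b => LinearMap.range (LinearMap.single R (fun _ => P) i))
    (fun i => ?_) ?_
  · exact IsSemisimpleModule.congr
      (LinearEquiv.ofInjective (LinearMap.single R (fun _ => P) i)
        (Pi.single_injective (M := fun _ : Fin b => P) i)).symm
  · simp_rw [LinearMap.range_eq_map, Submodule.iSup_map_single, Submodule.pi_top]

/-- Every homomorphism `M^a → P^b` is zero when every `M → P` is zero. -/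
lemma hom_pi_zero (hhom : ∀ f : M →ₗ[R] P, f = 0) {a b : ℕ}
    (f : (Fin a → M) →ₗ[R] (Fin b → P)) : f = 0 := by
  classical
  have hsingle : ∀ (i : Fin a) (m : M), f (Pi.single i m) = 0 := by
    intro i m
    ext j
    have h0 := hhom ((LinearMap.proj j).comp (f.comp (LinearMap.single R (fun _ => M) i)))
    simpa using LinearMap.congr_fun h0 m
  refine LinearMap.ext fun x => ?_
  show f x = 0
  have hx : x = ∑ i, Pi.single i (x i) := (Finset.univ_sum_single x).symm
  rw [hx, map_sum]
  simp [hsingle]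

/-- The key step: `M^a × P^b` is Rickart. -/
lemma key_rickart (hM : IsFinSigmaRickart R M) (hP : IsSimpleModule R P)
    (hhom : ∀ f : M →ₗ[R] P, f = 0) (a b : ℕ) (ha : 0 < a) :
    IsRickart R ((Fin a → M) × (Fin b → P)) := by
  classical
  set A := Fin a → M with hA
  set B := Fin b → P with hB
  intro φ
  set F : A →ₗ[R] A := (LinearMap.fst R A B) ∘ₗ φ ∘ₗ (LinearMap.inl R A B) with hF
  set G : B →ₗ[R] A := (LinearMap.fst R A B) ∘ₗ φ ∘ₗ (LinearMap.inr R A B) with hG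
  set H : B →ₗ[R] B := (LinearMap.snd R A B) ∘ₗ φ ∘ₗ (LinearMap.inr R A B) with hH
  have hz : (LinearMap.snd R A B) ∘ₗ φ ∘ₗ (LinearMap.inl R A B) = 0 := hom_pi_zero hhom _
  have hφ : ∀ x : A × B, φ x = (F x.1 + G x.2, H x.2) := by
    intro x
    have hx : x = ((x.1, 0) : A × B) + (0, x.2) := by simp
    rw [hx, map_add]
    have h1 : φ ((x.1, 0) : A × B) = (F x.1, 0) := by
      have h2 : (φ ((x.1, 0) : A × B)).2 = 0 := by
        simpa using LinearMap.congr_fun hz x.1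
      exact Prod.ext rfl h2
    have h3 : φ ((0, x.2) : A × B) = (G x.2, H x.2) := rfl
    rw [h1, h3]
    simp [Prod.ext_iff]
  have hker : ∀ x : A × B, x ∈ LinearMap.ker φ ↔ F x.1 + G x.2 = 0 ∧ H x.2 = 0 := by
    intro x
    rw [LinearMap.mem_ker, hφ x, Prod.mk_eq_zero]
  obtain ⟨C, hC⟩ := hM a ha F
  haveI : IsSemisimpleModule R B := pi_semisimple hP b
  obtain ⟨Q, hQ⟩ := exists_isCompl (LinearMap.ker H)
  -- the "graph" part
  set W : Submodule R (A × B) :=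
    (Submodule.prod C (LinearMap.ker H)) ⊓
      LinearMap.ker (F ∘ₗ LinearMap.fst R A B + G ∘ₗ LinearMap.snd R A B) with hW
  set W2 : Submodule R B := W.map (LinearMap.snd R A B) with hW2
  have hW2le : W2 ≤ LinearMap.ker H := by
    rintro y ⟨w, hw, rfl⟩
    exact hw.1.2
  obtain ⟨U, hUle, hUdisj, hUsup⟩ := relative_compl hW2le
  refine ⟨Submodule.prod C (U ⊔ Q), ?_⟩
  constructor
  · -- disjoint
    rw [Submodule.disjoint_def]
    intro x hxK hxN
    obtain ⟨hx1, hx2⟩ := (hker x).mp hxK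
    obtain ⟨hxC, hxUQ⟩ := hxN
    obtain ⟨u, hu, q, hq, huq⟩ := Submodule.mem_sup.mp hxUQ
    have hqker : q ∈ LinearMap.ker H := by
      have : H q = 0 := by
        have hHu : H u = 0 := hUle hu
        have : H x.2 = H u + H q := by rw [← map_add, huq]
        rw [hx2] at this
        rw [hHu, zero_add] at this
        exact this.symm
      exact this
    have hq0 : q = 0 := by
      have := hQ.disjoint
      rw [Submodule.disjoint_def] at this
      exact this q hqker hq
    have hx2U : x.2 ∈ U := by rw [← huq, hq0, add_zero]; exact hu
    have hxW : x ∈ W := by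
      refine ⟨⟨hxC, hUle hx2U⟩, ?_⟩
      simpa using hx1
    have hx2W2 : x.2 ∈ W2 := ⟨x, hxW, rfl⟩
    have hx20 : x.2 = 0 := by
      rw [Submodule.disjoint_def] at hUdisj
      exact hUdisj x.2 hx2W2 hx2U
    have hx10 : x.1 = 0 := by
      have hFx1 : F x.1 = 0 := by
        rw [hx20, map_zero, add_zero] at hx1
        exact hx1
      have := hC.disjoint
      rw [Submodule.disjoint_def] at this
      exact this x.1 hFx1 hxC
    exact Prod.ext hx10 hx20
  · -- codisjoint
    rw [codisjoint_iff, eq_top_iff]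
    intro x _
    rw [Submodule.mem_sup]
    -- decompose x.1 along ker F ⊔ C = ⊤
    have h1 : x.1 ∈ LinearMap.ker F ⊔ C := by rw [hC.sup_eq_top]; trivial
    obtain ⟨m₀, hm₀, c, hc, hmc⟩ := Submodule.mem_sup.mp h1
    have h2 : x.2 ∈ LinearMap.ker H ⊔ Q := by rw [hQ.sup_eq_top]; trivial
    obtain ⟨p₁, hp₁, p₂, hp₂, hp⟩ := Submodule.mem_sup.mp h2
    have h3 : p₁ ∈ W2 ⊔ U := by rw [hUsup]; exact hp₁
    obtain ⟨lw, hlw, u, hu, hlu⟩ := Submodule.mem_sup.mp h3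
    obtain ⟨w, hwW, hwsnd⟩ := hlw
    obtain ⟨⟨hwC, hwker⟩, hwzero⟩ := hwW
    refine ⟨(m₀ + w.1, w.2), ?_, (c - w.1, u + p₂), ⟨?_, ?_⟩, ?_⟩
    · rw [hker]
      constructor
      · have hFm₀ : F m₀ = 0 := hm₀
        have hw0 : F w.1 + G w.2 = 0 := by simpa using hwzero
        rw [map_add, hFm₀, zero_add]
        exact hw0
      · exact hwker
    · exact C.sub_mem hc hwC
    · exact Submodule.mem_sup.mpr ⟨u, hu, p₂, hp₂, rfl⟩
    · have h4 : m₀ + w.1 + (c - w.1) = x.1 := by rw [← hmc]; abel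
      have h5 : w.2 + (u + p₂) = x.2 := by
        have : w.2 = lw := hwsnd
        rw [this, ← hp, ← hlu]; abel
      exact Prod.ext h4 h5

/-- Splitting a power of a product. -/
def piProdEquiv (k : ℕ) :
    (Fin k → (M₁ × M₂)) ≃ₗ[R] (Fin k → M₁) × (Fin k → M₂) where
  toFun f := (fun i => (f i).1, fun i => (f i).2)
  map_add' f g := rfl
  map_smul' r f := rfl
  invFun p i := (p.1 i, p.2 i)
  left_inv f := rfl
  right_inv p := rfl

/-- Collapsing a double power. -/
noncomputable def powPowEquiv (k l : ℕ) : (Fin k → Fin l → M) ≃ₗ[R] (Fin (k * l) → M) :=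
  (LinearEquiv.curry R M (Fin k) (Fin l)).symm.trans
    (LinearEquiv.funCongrLeft R M finProdFinEquiv.symm)

end aux

/-- If `M` is finite Σ-Rickart and `P` is simple with `Hom_R(M, P) = 0`, then
`M^(l) ⊕ P^(n)` is finite Σ-Rickart for all `l, n > 0`. -/
theorem stmt19 {R M P : Type*} [Ring R] [AddCommGroup M] [Module R M]
    [AddCommGroup P] [Module R P]
    (hM : IsFinSigmaRickart R M) (hP : IsSimpleModule R P)
    (hhom : ∀ f : M →ₗ[R] P, f = 0) (l n : ℕ) (hl : 0 < l) (hn : 0 < n) :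
    IsFinSigmaRickart R ((Fin l → M) × (Fin n → P)) := by
  intro k hk
  have e : (Fin k → ((Fin l → M) × (Fin n → P))) ≃ₗ[R]
      (Fin (k * l) → M) × (Fin (k * n) → P) :=
    LinearEquiv.trans (piProdEquiv (R := R) (M₁ := Fin l → M) (M₂ := Fin n → P) k)
      (LinearEquiv.prodCongr (powPowEquiv (R := R) (M := M) k l) (powPowEquiv (R := R) (M := P) k n))
  exact isRickart_of_equiv e
    (key_rickart hM hP hhom (k * l) (k * n) (Nat.mul_pos hk hl))
end
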